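/- For a finite simple connected graph G, h(T(G)) = |E(G)| if and only if G has no internal vertex, i.e., no vertex of degree at least 2. -/

import Mathlib

/-- The primitive hole number of a simple graph: the number of triangles
(3-cliques) in the graph. -/
noncomputable def SimpleGraph.holeNumber {V : Type*} (G : SimpleGraph V) : ℕ :=
  {s : Finset V | G.IsNClique 3 s}.ncard

/-- The primitive degree of a vertex: the number of triangles (3-cliques)
of the graph containing that vertex. -/
noncomputable def SimpleGraph.primDegree {V : Type*} (G : SimpleGraph V) (v : V) : ℕ :=
  {s : Finset V | G.IsNClique 3 s ∧ v ∈ s}.ncard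

/-- The total graph of a simple graph `G`: vertices are the vertices and edges of `G`,
two of them adjacent iff the corresponding elements of `G` are adjacent or incident. -/
def SimpleGraph.totalGraph {V : Type*} (G : SimpleGraph V) :
    SimpleGraph (V ⊕ G.edgeSet) where
  Adj x y :=
    match x, y with
    | Sum.inl u, Sum.inl v => G.Adj u v
    | Sum.inl u, Sum.inr e => u ∈ (e : Sym2 V)
    | Sum.inr e, Sum.inl u => u ∈ (e : Sym2 V)
    | Sum.inr e, Sum.inr f => e ≠ f ∧ ∃ v, v ∈ (e : Sym2 V) ∧ v ∈ (f : Sym2 V)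
  symm := by
    constructor
    rintro (u | e) (v | f) h
    · exact G.adj_symm h
    · exact h
    · exact h
    · exact ⟨h.1.symm, h.2.imp fun v hv => ⟨hv.2, hv.1⟩⟩
  loopless := by
    constructor
    rintro (u | e) h
    · exact G.irrefl h
    · exact h.1 rfl

/-!
Every edge `e = uv` of `G` spans the triangle `{u, v, e}` of `T(G)`, and distinct edges give
distinct triangles, so `h(T(G)) ≥ |E(G)|`. A vertex `v` on two edges `e ≠ f` gives the further
triangle `{v, e, f}`. Conversely, if every vertex lies on at most one edge, then every edge of
`T(G)` lies in some edge triangle and every vertex of `T(G)` in at most one of them; hence any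
triangle of `T(G)` lies inside, and so equals, a single edge triangle.
-/

namespace SimpleGraph

open Sum

variable {V : Type*} (G : SimpleGraph V)

theorem degree_le_one_iff_subsingleton_incidenceSet {v : V} [Fintype (G.neighborSet v)] :
    G.degree v ≤ 1 ↔ (G.incidenceSet v).Subsingleton := by
  classical
  rw [← card_incidenceFinset_eq_degree, Finset.card_le_one_iff_subsingleton, coe_incidenceFinset]

open Classical in
noncomputable def edgeTriangle (e : G.edgeSet) : Finset (V ⊕ G.edgeSet) :=
  insert (inr e) ((e : Sym2 V).toFinset.map .inl)

variable {G}

@[simp]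
theorem inl_mem_edgeTriangle {e : G.edgeSet} {u : V} :
    inl u ∈ G.edgeTriangle e ↔ u ∈ (e : Sym2 V) := by
  simp [edgeTriangle]

@[simp]
theorem inr_mem_edgeTriangle {e f : G.edgeSet} :
    (inr f : V ⊕ G.edgeSet) ∈ G.edgeTriangle e ↔ f = e := by
  simp [edgeTriangle]

theorem edgeTriangle_mk [DecidableEq V] {u v : V} (h : G.Adj u v) :
    G.edgeTriangle ⟨s(u, v), h⟩ = {inr ⟨s(u, v), h⟩, inl u, inl v} := by
  ext (x | x) <;> simp

theorem isNClique_edgeTriangle (e : G.edgeSet) :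
    G.totalGraph.IsNClique 3 (G.edgeTriangle e) := by
  obtain ⟨e, he⟩ := e
  induction e using Sym2.ind with
  | _ u v =>
    classical
    rw [edgeTriangle_mk he, is3Clique_triple_iff]
    exact ⟨Sym2.mem_mk_left u v, Sym2.mem_mk_right u v, he⟩

variable (G) in
theorem edgeTriangle_injective : Function.Injective G.edgeTriangle := fun e f h => by
  simpa [h] using inr_mem_edgeTriangle (e := e) (f := e)

variable (G) in
theorem range_edgeTriangle_subset :
    Set.range G.edgeTriangle ⊆ {s | G.totalGraph.IsNClique 3 s} := by
  rintro _ ⟨e, rfl⟩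
  exact isNClique_edgeTriangle e

variable (G) in
theorem ncard_range_edgeTriangle : (Set.range G.edgeTriangle).ncard = G.edgeSet.ncard := by
  rw [Set.ncard_range_of_injective (edgeTriangle_injective G), Nat.card_coe_set_eq]

section MaxDegreeOne

variable (hG : ∀ v, (G.incidenceSet v).Subsingleton)
include hG

theorem eq_of_mem_edgeTriangle {x : V ⊕ G.edgeSet} {e f : G.edgeSet}
    (he : x ∈ G.edgeTriangle e) (hf : x ∈ G.edgeTriangle f) : e = f := by
  rcases x with u | g
  · exact Subtype.ext (hG u ⟨e.2, inl_mem_edgeTriangle.mp he⟩ ⟨f.2, inl_mem_edgeTriangle.mp hf⟩)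
  · rw [inr_mem_edgeTriangle] at he hf
    exact he.symm.trans hf

theorem exists_mem_edgeTriangle_of_adj {x y : V ⊕ G.edgeSet} (h : G.totalGraph.Adj x y) :
    ∃ e, x ∈ G.edgeTriangle e ∧ y ∈ G.edgeTriangle e := by
  rcases x with u | e <;> rcases y with v | f
  · exact ⟨⟨s(u, v), h⟩, by simp⟩
  · exact ⟨f, inl_mem_edgeTriangle.mpr h, by simp⟩
  · exact ⟨e, by simp, inl_mem_edgeTriangle.mpr h⟩
  · obtain ⟨hef, w, hwe, hwf⟩ := h
    exact absurd (Subtype.ext (hG w ⟨e.2, hwe⟩ ⟨f.2, hwf⟩)) hef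

theorem eq_edgeTriangle_of_isNClique {s : Finset (V ⊕ G.edgeSet)}
    (hs : G.totalGraph.IsNClique 3 s) : ∃ e, s = G.edgeTriangle e := by
  have hcard : 1 < s.card := by rw [hs.card_eq]; norm_num
  obtain ⟨x, hx, y, hy, hxy⟩ := Finset.one_lt_card.mp hcard
  obtain ⟨e, hxe, -⟩ := exists_mem_edgeTriangle_of_adj hG (hs.1 hx hy hxy)
  have hsub : s ⊆ G.edgeTriangle e := by
    intro z hz
    obtain rfl | hxz := eq_or_ne x z
    · exact hxe
    obtain ⟨f, hxf, hzf⟩ := exists_mem_edgeTriangle_of_adj hG (hs.1 hx hz hxz)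
    rwa [eq_of_mem_edgeTriangle hG hxe hxf]
  exact ⟨e, Finset.eq_of_subset_of_card_le hsub
    (by rw [hs.card_eq, (isNClique_edgeTriangle e).card_eq])⟩

theorem holeNumber_totalGraph_eq_ncard_edgeSet :
    G.totalGraph.holeNumber = G.edgeSet.ncard := by
  have hrange : {s | G.totalGraph.IsNClique 3 s} = Set.range G.edgeTriangle :=
    (range_edgeTriangle_subset G).antisymm' fun s hs =>
      (eq_edgeTriangle_of_isNClique hG hs).imp fun _ => Eq.symm
  rw [holeNumber, hrange, ncard_range_edgeTriangle]

end MaxDegreeOne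

theorem ncard_edgeSet_lt_holeNumber_totalGraph [Finite V] {v : V}
    (hv : ¬ (G.incidenceSet v).Subsingleton) :
    G.edgeSet.ncard < G.totalGraph.holeNumber := by
  classical
  obtain ⟨e, ⟨he, hve⟩, f, ⟨hf, hvf⟩, hef⟩ := Set.not_subsingleton_iff.mp hv
  have hef' : (⟨e, he⟩ : G.edgeSet) ≠ ⟨f, hf⟩ := fun h => hef (congrArg Subtype.val h)
  set t : Finset (V ⊕ G.edgeSet) := {inl v, inr ⟨e, he⟩, inr ⟨f, hf⟩}
  have ht : G.totalGraph.IsNClique 3 t :=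
    is3Clique_triple_iff.mpr ⟨hve, hvf, hef', v, hve, hvf⟩
  have htn : t ∉ Set.range G.edgeTriangle := by
    rintro ⟨g, hg⟩
    have he' : inr ⟨e, he⟩ ∈ G.edgeTriangle g := by simp [hg, t]
    have hf' : inr ⟨f, hf⟩ ∈ G.edgeTriangle g := by simp [hg, t]
    rw [inr_mem_edgeTriangle] at he' hf'
    exact hef' (he'.trans hf'.symm)
  calc G.edgeSet.ncard
      < (insert t (Set.range G.edgeTriangle)).ncard := by
        rw [Set.ncard_insert_of_notMem htn, ncard_range_edgeTriangle]; omega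
    _ ≤ G.totalGraph.holeNumber :=
        Set.ncard_le_ncard (Set.insert_subset ht (range_edgeTriangle_subset G)) (Set.toFinite _)

end SimpleGraph

theorem holeNumber_totalGraph_eq_iff_general {V : Type*} [Fintype V]
    (G : SimpleGraph V) [DecidableRel G.Adj] :
    G.totalGraph.holeNumber = G.edgeSet.ncard ↔ ¬ ∃ v : V, 2 ≤ G.degree v := by
  simp only [not_exists, not_le, Nat.lt_succ_iff,
    SimpleGraph.degree_le_one_iff_subsingleton_incidenceSet]
  refine ⟨fun h v => ?_, SimpleGraph.holeNumber_totalGraph_eq_ncard_edgeSet⟩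
  by_contra hv
  exact (SimpleGraph.ncard_edgeSet_lt_holeNumber_totalGraph hv).ne' h

/-- For a finite simple connected graph `G`, `h(T(G)) = |E(G)|` iff `G` has no
internal vertex (a vertex of degree at least `2`). -/
theorem holeNumber_totalGraph_eq_iff {V : Type*} [Fintype V]
    (G : SimpleGraph V) [DecidableRel G.Adj] (hconn : G.Connected) :
    G.totalGraph.holeNumber = G.edgeSet.ncard ↔ ¬ ∃ v : V, 2 ≤ G.degree v :=
  holeNumber_totalGraph_eq_iff_general G
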